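/- Let d ≥ 2 and t ≥ 1. Every finite collection of boxes in ℝ^d — isometric images of closed axis-aligned rectangular boxes, not necessarily axis-aligned — each having aspect ratio (largest side length divided by smallest side length) at most t, is (3t√d)^d-fat. -/

import Mathlib

open Classical

/-- A tree decomposition of a graph `G`. -/
structure TreeDecomp {V : Type*} (G : SimpleGraph V) where
  ι : Type
  fin : Fintype ι
  T : SimpleGraph ι
  isTree : T.IsTree
  bag : ι → Set V
  mem_bag : ∀ v : V, ∃ t, v ∈ bag t
  edge_bag : ∀ ⦃u v : V⦄, G.Adj u v → ∃ t, u ∈ bag t ∧ v ∈ bag t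
  bag_connected : ∀ v : V, (T.induce {t | v ∈ bag t}).Connected

/-- `I` is an independent set of `G` contained in `S`, i.e. an independent set of `G[S]`. -/
def IsIndepSetIn {V : Type*} (G : SimpleGraph V) (S : Set V) (I : Finset V) : Prop :=
  ↑I ⊆ S ∧ ∀ u ∈ I, ∀ v ∈ I, u ≠ v → ¬ G.Adj u v

/-- `α(G[S]) ≤ k`. -/
def IndepLE {V : Type*} (G : SimpleGraph V) (S : Set V) (k : ℕ) : Prop :=
  ∀ I : Finset V, IsIndepSetIn G S I → I.card ≤ k

/-- The independence number of the tree decomposition is at most `k`. -/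
def TreeDecomp.IndepNumLE {V : Type*} {G : SimpleGraph V} (td : TreeDecomp G) (k : ℕ) : Prop :=
  ∀ t : td.ι, IndepLE G (td.bag t) k

/-- The tree-independence number of `G` is at most `k`. -/
def treeAlphaLE {V : Type*} (G : SimpleGraph V) (k : ℕ) : Prop :=
  ∃ td : TreeDecomp G, td.IndepNumLE k

/-- The tree-independence number of `G`. -/
noncomputable def treeAlpha {V : Type*} (G : SimpleGraph V) : ℕ :=
  sInf {k | treeAlphaLE G k}

/-- A layering of `G`, encoded by the function sending a vertex to the index of its layer. -/
def IsLayering {V : Type*} (G : SimpleGraph V) (L : V → ℕ) : Prop :=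
  ∀ ⦃u v : V⦄, G.Adj u v → (L u : ℤ) ≤ (L v : ℤ) + 1

/-- The layered tree-independence number of `G` is at most `k`. -/
def layeredTreeAlphaLE {V : Type*} (G : SimpleGraph V) (k : ℕ) : Prop :=
  ∃ (td : TreeDecomp G) (L : V → ℕ), IsLayering G L ∧
    ∀ (t : td.ι) (i : ℕ), IndepLE G (td.bag t ∩ {v | L v = i}) k

/-- The layered tree-independence number of `G`. -/
noncomputable def layeredTreeAlpha {V : Type*} (G : SimpleGraph V) : ℕ :=
  sInf {k | layeredTreeAlphaLE G k}

/-- The number of elements of the multiset `𝒞` containing `v` (with multiplicity). -/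
noncomputable def coverCount {V : Type*} (𝒞 : Multiset (Set V)) (v : V) : ℕ :=
  Multiset.countP (fun C => v ∈ C) 𝒞

/-- `𝒞` is a `β`-general cover: every vertex belongs to at least `β·|𝒞|` elements. -/
def IsGeneralCover {V : Type*} (β : ℝ) (𝒞 : Multiset (Set V)) : Prop :=
  𝒞 ≠ 0 ∧ ∀ v : V, β * (Multiset.card 𝒞 : ℝ) ≤ (coverCount 𝒞 v : ℝ)

/-- The intersection graph of an (indexed) family of sets. -/
def intersectionGraph {ι : Type*} {α : Type*} (D : ι → Set α) : SimpleGraph ι where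
  Adj i j := i ≠ j ∧ (D i ∩ D j).Nonempty
  symm := by
    constructor
    rintro i j ⟨hne, x, hx1, hx2⟩
    exact ⟨hne.symm, x, hx2, hx1⟩
  loopless := by
    constructor
    rintro i ⟨hne, -⟩
    exact hne rfl

/-- The `p`-th power of a graph. -/
def gpower {V : Type*} (G : SimpleGraph V) (p : ℕ) : SimpleGraph V where
  Adj u v := u ≠ v ∧ ∃ w : G.Walk u v, w.length ≤ p
  symm := by
    constructor
    rintro u v ⟨hne, w, hw⟩
    exact ⟨hne.symm, w.reverse, by simpa using hw⟩
  loopless := by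
    constructor
    rintro u ⟨hne, -⟩
    exact hne rfl

/-- The axis-aligned closed hypercube of side length `r` with lower corner `x`. -/
def cube (d : ℕ) (x : EuclideanSpace ℝ (Fin d)) (r : ℝ) : Set (EuclideanSpace ℝ (Fin d)) :=
  {y | ∀ i, x i ≤ y i ∧ y i ≤ x i + r}

/-- The size of an object: the side length of its smallest enclosing axis-aligned hypercube. -/
noncomputable def objSize (d : ℕ) (O : Set (EuclideanSpace ℝ (Fin d))) : ℝ :=
  sInf {r : ℝ | 0 ≤ r ∧ ∃ x, O ⊆ cube d x r}

/-- The collection `O` is `c`-fat. -/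
def IsFat {ι : Type*} (d : ℕ) (c : ℝ) (O : ι → Set (EuclideanSpace ℝ (Fin d))) : Prop :=
  ∀ r : ℝ, 0 < r → ∀ x : EuclideanSpace ℝ (Fin d), ∀ P : Finset ι,
    (∀ i ∈ P, ∀ j ∈ P, i ≠ j → Disjoint (O i) (O j)) →
    (∀ i ∈ P, (O i ∩ cube d x r).Nonempty ∧ r ≤ objSize d (O i)) →
    ∃ pts : Finset (EuclideanSpace ℝ (Fin d)),
      (pts.card : ℝ) ≤ c ∧ ∀ i ∈ P, ∃ p ∈ pts, p ∈ O i

/-- The `n`-dimensional grid graph of width `n`. -/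
def gridGraphN (n : ℕ) : SimpleGraph (Fin n → Fin n) where
  Adj a b := ∑ i, ((a i : ℤ) - (b i : ℤ)).natAbs = 1
  symm := by
    constructor
    intro a b h
    try beta_reduce at h ⊢
    rw [← h]
    exact Finset.sum_congr rfl fun i _ => by omega
  loopless := by
    constructor
    intro a h
    simp at h

/-- The grid graph on `ℤ²`. -/
def latticeGraph : SimpleGraph (ℤ × ℤ) where
  Adj p q := (p.1 - q.1).natAbs + (p.2 - q.2).natAbs = 1
  symm := by
    constructor
    intro p q h
    omega
  loopless := by
    constructor
    intro p h
    simp at h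

/-- `P` is (the vertex set of) a path on the integer grid: a finite nonempty subset of `ℤ²`
whose induced subgraph in the grid graph is a path. -/
def IsGridPath (P : Set (ℤ × ℤ)) : Prop :=
  P.Finite ∧ P.Nonempty ∧ (latticeGraph.induce P).IsTree ∧
    ∀ v : P, ((latticeGraph.induce P).neighborSet v).ncard ≤ 2

/-! A box of aspect ratio at most `t` and size at least `r` has all sides at least
`u = r / (t√d)`, since its size is at most its diameter, which is at most
`√d · t · (shortest side)`. So each of the pairwise disjoint boxes meeting the cube of side `r`
contains an isometric copy of the cube of side `u` within distance `√d u` of a point of that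
cube. These copies are disjoint and lie in the concentric cube of side
`r + 2√d u = (t + 2)√d u`; comparing volumes bounds the number of boxes by
`((t + 2)√d)^d ≤ (3t√d)^d`, and one point per box pierces them all. -/

open MeasureTheory

theorem card_mul_le_measure_of_pairwiseDisjoint {ι α : Type*} [MeasurableSpace α]
    {μ : Measure α} {P : Finset ι} {C : ι → Set α} {S : Set α}
    {v : ENNReal} (hdisj : (P : Set ι).PairwiseDisjoint C) (hmeas : ∀ i ∈ P, MeasurableSet (C i))
    (hvol : ∀ i ∈ P, v ≤ μ (C i)) (hsub : ∀ i ∈ P, C i ⊆ S) :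
    P.card * v ≤ μ S :=
  calc P.card * v = ∑ _i ∈ P, v := by rw [Finset.sum_const, nsmul_eq_mul]
    _ ≤ ∑ i ∈ P, μ (C i) := Finset.sum_le_sum hvol
    _ = μ (⋃ i ∈ P, C i) := (measure_biUnion_finset hdisj hmeas).symm
    _ ≤ μ S := measure_mono (Set.iUnion₂_subset hsub)

theorem Isometry.volume_image {V W : Type*} [NormedAddCommGroup V] [InnerProductSpace ℝ V]
    [FiniteDimensional ℝ V] [MeasurableSpace V] [BorelSpace V] [NormedAddCommGroup W]
    [InnerProductSpace ℝ W] [FiniteDimensional ℝ W] [MeasurableSpace W] [BorelSpace W]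
    (h : Module.finrank ℝ V = Module.finrank ℝ W) {f : V → W} (hf : Isometry f) (s : Set V) :
    volume (f '' s) = volume s := by
  rw [← InnerProductSpace.euclideanHausdorffMeasure_eq_volume,
    ← InnerProductSpace.euclideanHausdorffMeasure_eq_volume, h, hf.euclideanHausdorffMeasure_image]

namespace EuclideanSpace

variable {d : ℕ}

def coordBox (lo hi : Fin d → ℝ) : Set (EuclideanSpace ℝ (Fin d)) :=
  {y | ∀ j, lo j ≤ y j ∧ y j ≤ hi j}

def IsBoxOfAspectRatioLE (t : ℝ) (O : Set (EuclideanSpace ℝ (Fin d))) : Prop :=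
  ∃ (f : EuclideanSpace ℝ (Fin d) ≃ᵢ EuclideanSpace ℝ (Fin d)) (lo hi : Fin d → ℝ),
    (∀ j, lo j < hi j) ∧ (∀ j k, hi j - lo j ≤ t * (hi k - lo k)) ∧ O = f '' coordBox lo hi

theorem coordBox_eq_preimage (lo hi : Fin d → ℝ) :
    coordBox lo hi = WithLp.ofLp ⁻¹' Set.Icc lo hi := by
  ext y
  simp [coordBox, Pi.le_def, forall_and]

theorem cube_eq_coordBox (x : EuclideanSpace ℝ (Fin d)) (r : ℝ) :
    cube d x r = coordBox x (fun j => x j + r) :=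
  rfl

theorem measurableSet_coordBox (lo hi : Fin d → ℝ) : MeasurableSet (coordBox lo hi) := by
  rw [coordBox_eq_preimage]
  exact measurableSet_Icc.preimage (PiLp.volume_preserving_ofLp (Fin d)).measurable

theorem volume_coordBox (lo hi : Fin d → ℝ) :
    volume (coordBox lo hi) = ∏ j, ENNReal.ofReal (hi j - lo j) := by
  rw [coordBox_eq_preimage, (PiLp.volume_preserving_ofLp (Fin d)).measure_preimage
    measurableSet_Icc.nullMeasurableSet, Real.volume_Icc_pi]

theorem volume_cube (x : EuclideanSpace ℝ (Fin d)) (r : ℝ) :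
    volume (cube d x r) = ENNReal.ofReal r ^ d := by
  simp [cube_eq_coordBox, volume_coordBox]

theorem abs_sub_apply_le_dist (y z : EuclideanSpace ℝ (Fin d)) (j : Fin d) :
    |y j - z j| ≤ dist y z := by
  simpa [Real.dist_eq] using PiLp.dist_apply_le y z j

theorem dist_le_sqrt_mul_of_forall_abs_sub_le {y z : EuclideanSpace ℝ (Fin d)} {c : ℝ}
    (hc : 0 ≤ c) (h : ∀ j, |y j - z j| ≤ c) : dist y z ≤ √d * c := by
  rw [EuclideanSpace.dist_eq]
  calc √(∑ j, dist (y j) (z j) ^ 2) ≤ √(∑ _j : Fin d, c ^ 2) := by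
        gcongr with j
        rw [Real.dist_eq]
        exact h j
    _ = √d * c := by
        rw [Finset.sum_const, Finset.card_univ, Fintype.card_fin, nsmul_eq_mul,
          Real.sqrt_mul (Nat.cast_nonneg d), Real.sqrt_sq hc]

theorem objSize_le_of_forall_dist_le {O : Set (EuclideanSpace ℝ (Fin d))} {D : ℝ} (hD : 0 ≤ D)
    (h : ∀ y ∈ O, ∀ z ∈ O, dist y z ≤ D) : objSize d O ≤ D := by
  have coord_ge : ∀ y ∈ O, ∀ z ∈ O, ∀ j, y j - D ≤ z j := fun y hy z hz j => by
    linarith [(abs_le.1 ((abs_sub_apply_le_dist y z j).trans (h y hy z hz))).2]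
  refine csInf_le ⟨0, fun _ hr => hr.1⟩ ⟨hD, WithLp.toLp 2 fun j => sInf ((· j) '' O), ?_⟩
  intro y hy j
  have hbdd : BddBelow ((· j) '' O) :=
    ⟨y j - D, by rintro _ ⟨z, hz, rfl⟩; exact coord_ge y hy z hz j⟩
  refine ⟨csInf_le hbdd ⟨y, hy, rfl⟩, ?_⟩
  have : y j - D ≤ sInf ((· j) '' O) :=
    le_csInf ⟨y j, y, hy, rfl⟩ (by rintro _ ⟨z, hz, rfl⟩; exact coord_ge y hy z hz j)
  change y j ≤ sInf ((· j) '' O) + D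
  linarith

theorem objSize_image_coordBox_le {f : EuclideanSpace ℝ (Fin d) → EuclideanSpace ℝ (Fin d)}
    (hf : Isometry f) {lo hi : Fin d → ℝ} {s : ℝ} (hs : 0 ≤ s) (h : ∀ j, hi j - lo j ≤ s) :
    objSize d (f '' coordBox lo hi) ≤ √d * s := by
  refine objSize_le_of_forall_dist_le (by positivity) ?_
  rintro _ ⟨y, hy, rfl⟩ _ ⟨z, hz, rfl⟩
  rw [hf.dist_eq]
  refine dist_le_sqrt_mul_of_forall_abs_sub_le hs fun j => (abs_le.2 ⟨?_, ?_⟩).trans (h j) <;>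
    linarith [hy j, hz j]

theorem exists_cube_subset_coordBox {lo hi : Fin d → ℝ} {u : ℝ} (hu : 0 ≤ u)
    (hside : ∀ j, u ≤ hi j - lo j) {q : EuclideanSpace ℝ (Fin d)} (hq : q ∈ coordBox lo hi) :
    ∃ a, q ∈ cube d a u ∧ cube d a u ⊆ coordBox lo hi := by
  refine ⟨WithLp.toLp 2 fun j => min (q j) (hi j - u), fun j => ?_, fun y hy j => ?_⟩
  · change min (q j) (hi j - u) ≤ q j ∧ q j ≤ min (q j) (hi j - u) + u
    constructor <;> cases min_cases (q j) (hi j - u) <;> linarith [hq j]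
  · have hy : min (q j) (hi j - u) ≤ y j ∧ y j ≤ min (q j) (hi j - u) + u := hy j
    constructor <;> cases min_cases (q j) (hi j - u) <;> linarith [hq j, hside j]

theorem dist_le_of_mem_cube {a y z : EuclideanSpace ℝ (Fin d)} {u : ℝ} (hu : 0 ≤ u)
    (hy : y ∈ cube d a u) (hz : z ∈ cube d a u) : dist y z ≤ √d * u :=
  dist_le_sqrt_mul_of_forall_abs_sub_le hu fun j =>
    abs_le.2 ⟨by linarith [hy j, hz j], by linarith [hy j, hz j]⟩

theorem mem_cube_of_dist_le {x p c : EuclideanSpace ℝ (Fin d)} {r δ : ℝ}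
    (hp : p ∈ cube d x r) (hc : dist c p ≤ δ) :
    c ∈ cube d (WithLp.toLp 2 fun j => x j - δ) (r + 2 * δ) := fun j => by
  have := abs_le.1 ((abs_sub_apply_le_dist c p j).trans hc)
  change x j - δ ≤ c j ∧ c j ≤ x j - δ + (r + 2 * δ)
  constructor <;> linarith [hp j]

theorem IsBoxOfAspectRatioLE.exists_subset_near {t u : ℝ} {O : Set (EuclideanSpace ℝ (Fin d))}
    (hO : IsBoxOfAspectRatioLE t O) (hd : 0 < d) (hu : 0 ≤ u) (hur : t * √d * u ≤ objSize d O)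
    {p : EuclideanSpace ℝ (Fin d)} (hp : p ∈ O) :
    ∃ C ⊆ O, MeasurableSet C ∧ volume C = ENNReal.ofReal u ^ d ∧ ∀ c ∈ C, dist c p ≤ √d * u := by
  obtain ⟨f, lo, hi, hlt, hasp, rfl⟩ := hO
  obtain ⟨q, hq, rfl⟩ := hp
  have side : ∀ k, u ≤ hi k - lo k := fun k => by
    have hside : 0 < hi k - lo k := sub_pos.2 (hlt k)
    have ht : 1 ≤ t := (le_mul_iff_one_le_left hside).1 (hasp k k)
    have hsize := objSize_image_coordBox_le f.isometry (by positivity) fun j => hasp j k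
    have : t * √d * u ≤ t * √d * (hi k - lo k) := by linarith
    exact le_of_mul_le_mul_left this (by positivity)
  obtain ⟨a, hqa, hsub⟩ := exists_cube_subset_coordBox hu side hq
  refine ⟨f '' cube d a u, Set.image_mono hsub, ?_, ?_, ?_⟩
  · refine f.toHomeomorph.measurableEmbedding.measurableSet_image.2 ?_
    rw [cube_eq_coordBox]
    exact measurableSet_coordBox _ _
  · rw [f.isometry.volume_image rfl, volume_cube]
  · rintro _ ⟨y, hy, rfl⟩
    rw [f.dist_eq]
    exact dist_le_of_mem_cube hu hy hqa

theorem card_le_of_pairwiseDisjoint_boxes {ι : Type*} {t r : ℝ} {x : EuclideanSpace ℝ (Fin d)}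
    {O : ι → Set (EuclideanSpace ℝ (Fin d))} {P : Finset ι} (hd : 0 < d) (ht : 0 < t)
    (hr : 0 < r) (hbox : ∀ i ∈ P, IsBoxOfAspectRatioLE t (O i))
    (hdisj : (P : Set ι).PairwiseDisjoint O)
    (hmem : ∀ i ∈ P, (O i ∩ cube d x r).Nonempty ∧ r ≤ objSize d (O i)) :
    (P.card : ℝ) ≤ ((t + 2) * √d) ^ d := by
  have hsqrt : 0 < √d := Real.sqrt_pos.2 (Nat.cast_pos.2 hd)
  set u := r / (t * √d)
  have hu : 0 < u := by positivity
  have hR : r + 2 * (√d * u) = (t + 2) * √d * u := by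
    simp only [u]
    field_simp
  have copies : ∀ i ∈ P, ∃ C ⊆ O i, MeasurableSet C ∧ volume C = ENNReal.ofReal u ^ d ∧
      C ⊆ cube d (WithLp.toLp 2 fun j => x j - √d * u) (r + 2 * (√d * u)) := by
    intro i hi
    obtain ⟨⟨p, hpO, hpx⟩, hsize⟩ := hmem i hi
    have hur : t * √d * u ≤ objSize d (O i) := by rwa [mul_div_cancel₀ _ (by positivity)]
    obtain ⟨C, hCO, hCm, hCv, hnear⟩ := (hbox i hi).exists_subset_near hd hu.le hur hpO
    exact ⟨C, hCO, hCm, hCv, fun c hc => mem_cube_of_dist_le hpx (hnear c hc)⟩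
  choose! C hCO hCm hCv hCsub using copies
  have hpack := card_mul_le_measure_of_pairwiseDisjoint (hdisj.mono_on hCO) hCm
    (fun i hi => (hCv i hi).ge) hCsub
  rw [volume_cube, hR, ← ENNReal.ofReal_natCast, ← ENNReal.ofReal_pow hu.le,
    ← ENNReal.ofReal_mul (Nat.cast_nonneg _), ← ENNReal.ofReal_pow (by positivity),
    ENNReal.ofReal_le_ofReal_iff (by positivity), mul_pow] at hpack
  exact le_of_mul_le_mul_right hpack (by positivity)

end EuclideanSpace

theorem stmt12_general {ι : Type} (d : ℕ) (hd : 2 ≤ d) (t : ℝ) (ht : 1 ≤ t)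
    (O : ι → Set (EuclideanSpace ℝ (Fin d)))
    (hbox : ∀ i, ∃ (f : EuclideanSpace ℝ (Fin d) ≃ᵢ EuclideanSpace ℝ (Fin d))
      (lo hi : Fin d → ℝ),
        (∀ j, lo j < hi j) ∧
        (∀ j k, hi j - lo j ≤ t * (hi k - lo k)) ∧
        O i = f '' {y : EuclideanSpace ℝ (Fin d) | ∀ j, lo j ≤ y j ∧ y j ≤ hi j}) :
    IsFat d ((3 * t * Real.sqrt d) ^ d) O := by
  intro r hr x P hdisj hmem
  choose! p hp using fun i hi => (hmem i hi).1
  refine ⟨P.image p, ?_, fun i hi => ⟨p i, Finset.mem_image_of_mem p hi, (hp i hi).1⟩⟩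
  calc ((P.image p).card : ℝ) ≤ P.card := by exact_mod_cast Finset.card_image_le
    _ ≤ ((t + 2) * √d) ^ d :=
      EuclideanSpace.card_le_of_pairwiseDisjoint_boxes (by omega) (by linarith) hr
        (fun i _ => hbox i) hdisj hmem
    _ ≤ (3 * t * √d) ^ d := by gcongr; linarith

/-- Every finite collection of (not necessarily axis-aligned) boxes in `ℝ^d`
(`d ≥ 2`) with aspect ratio at most `t` is `(3t√d)^d`-fat. -/
theorem stmt12 {ι : Type} [Fintype ι] (d : ℕ) (hd : 2 ≤ d) (t : ℝ) (ht : 1 ≤ t)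
    (O : ι → Set (EuclideanSpace ℝ (Fin d)))
    (hbox : ∀ i, ∃ (f : EuclideanSpace ℝ (Fin d) ≃ᵢ EuclideanSpace ℝ (Fin d))
      (lo hi : Fin d → ℝ),
        (∀ j, lo j < hi j) ∧
        (∀ j k, hi j - lo j ≤ t * (hi k - lo k)) ∧
        O i = f '' {y : EuclideanSpace ℝ (Fin d) | ∀ j, lo j ≤ y j ∧ y j ≤ hi j}) :
    IsFat d ((3 * t * Real.sqrt d) ^ d) O :=
  stmt12_general d hd t ht O hbox
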